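/- The function x ↦ log(1 + x + x²) + x²/6 is convex on ℝ. -/

import Mathlib

/-!
With `u = x² + x`, the second derivative of `log (1 + x + x²) + x²/6` is
`(1 - 2u)/(1 + u)² + 1/3 = (u - 2)² / (3 (1 + u)²)`, a square over a positive quantity.
-/

open Real Set

lemma convexOn_univ_of_hasDerivAt2_nonneg {f f' f'' : ℝ → ℝ}
    (hf : ∀ x, HasDerivAt f (f' x) x) (hf' : ∀ x, HasDerivAt f' (f'' x) x)
    (hf'' : ∀ x, 0 ≤ f'' x) : ConvexOn ℝ univ f :=
  convexOn_of_hasDerivWithinAt2_nonneg convex_univ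
    (fun x _ ↦ (hf x).continuousAt.continuousWithinAt)
    (fun x _ ↦ (hf x).hasDerivWithinAt) (fun x _ ↦ (hf' x).hasDerivWithinAt)
    (fun x _ ↦ hf'' x)

lemma one_add_add_sq_pos (x : ℝ) : 0 < 1 + x + x ^ 2 := by
  nlinarith [sq_nonneg (x + 1 / 2)]

lemma hasDerivAt_one_add_add_sq (x : ℝ) :
    HasDerivAt (fun x : ℝ ↦ 1 + x + x ^ 2) (1 + 2 * x) x := by
  refine (((hasDerivAt_id' x).const_add 1).add (hasDerivAt_pow 2 x)).congr_deriv ?_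
  ring

lemma hasDerivAt_log_one_add_add_sq_add_sq_div_six (x : ℝ) :
    HasDerivAt (fun x : ℝ ↦ log (1 + x + x ^ 2) + x ^ 2 / 6)
      ((1 + 2 * x) / (1 + x + x ^ 2) + x / 3) x := by
  refine (((hasDerivAt_one_add_add_sq x).log (one_add_add_sq_pos x).ne').add
    ((hasDerivAt_pow 2 x).div_const 6)).congr_deriv ?_
  ring

lemma hasDerivAt_div_one_add_add_sq_add_div_three (x : ℝ) :
    HasDerivAt (fun x : ℝ ↦ (1 + 2 * x) / (1 + x + x ^ 2) + x / 3)
      (((x - 1) * (x + 2)) ^ 2 / (3 * (1 + x + x ^ 2) ^ 2)) x := by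
  have hnum : HasDerivAt (fun x : ℝ ↦ 1 + 2 * x) 2 x := by
    simpa using ((hasDerivAt_id' x).const_mul 2).const_add 1
  refine ((hnum.div (hasDerivAt_one_add_add_sq x) (one_add_add_sq_pos x).ne').add
    ((hasDerivAt_id' x).div_const 3)).congr_deriv ?_
  field_simp [(one_add_add_sq_pos x).ne']
  ring

/-- The function `x ↦ log (1 + x + x²) + x²/6` is convex on `ℝ`. -/
theorem log_quadratic_convex :
    ConvexOn ℝ Set.univ (fun x : ℝ => Real.log (1 + x + x ^ 2) + x ^ 2 / 6) :=
  convexOn_univ_of_hasDerivAt2_nonneg hasDerivAt_log_one_add_add_sq_add_sq_div_six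
    hasDerivAt_div_one_add_add_sq_add_div_three fun _ ↦ by positivity
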